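/- Let σ : S → A be a strong-receptive, courteous pre-∼-strategy on a race-preserving essp A (in particular on a tcg). Then the essp S is race-preserving: for every θ in the family of S with extensions θ ⊆⁺ θ₁ and θ ⊆⁻ θ₂ in the family such that dom(θ₁) ∪ dom(θ₂) ∈ C(S), the union θ₁ ∪ θ₂ is in the family of S. -/

import Mathlib

set_option autoImplicit false
set_option maxHeartbeats 1000000

universe u

/-- An event structure. -/
structure ES (E : Type u) where
  le : E → E → Prop
  le_refl : ∀ e, le e e
  le_trans : ∀ {a b c}, le a b → le b c → le a c
  le_antisymm : ∀ {a b}, le a b → le b a → a = b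
  Con : Set (Set E)
  con_empty : (∅ : Set E) ∈ Con
  causes_finite : ∀ e, {e' | le e' e}.Finite
  con_finite : ∀ X ∈ Con, Set.Finite X
  con_singleton : ∀ e, ({e} : Set E) ∈ Con
  con_mono : ∀ {X Y : Set E}, Y ⊆ X → X ∈ Con → Y ∈ Con
  con_extend : ∀ {X : Set E} {e e' : E}, X ∈ Con → le e e' → e' ∈ X → X ∪ {e} ∈ Con

variable {E F G H : Type u}

/-- Configurations: finite (via `Con`), consistent, down-closed subsets. -/
def Config (A : ES E) (x : Set E) : Prop :=
  x ∈ A.Con ∧ ∀ ⦃e : E⦄, e ∈ x → ∀ ⦃e' : E⦄, A.le e' e → e' ∈ x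

/-- Covering: `x —⊂ e`. -/
def Cov (A : ES E) (x : Set E) (e : E) : Prop :=
  Config A x ∧ e ∉ x ∧ Config A (insert e x)

def ESlt (A : ES E) (e e' : E) : Prop := A.le e e' ∧ e ≠ e'

/-- Immediate causality `e ⋖ e'`. -/
def Imm (A : ES E) (e e' : E) : Prop :=
  ESlt A e e' ∧ ∀ e'', ESlt A e e'' → ESlt A e'' e' → False

/-- Total maps of event structures. -/
def IsMap (A : ES E) (B : ES F) (f : E → F) : Prop :=
  (∀ x, Config A x → Config B (f '' x)) ∧
  (∀ x, Config A x → ∀ e ∈ x, ∀ e' ∈ x, f e = f e' → e = e')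

def Rigid (A : ES E) (B : ES F) (f : E → F) : Prop :=
  IsMap A B f ∧ ∀ e e', A.le e e' → B.le (f e) (f e')

def OpenMap (A : ES E) (B : ES F) (f : E → F) : Prop :=
  Rigid A B f ∧ ∀ x y, Config A x → Config B y → f '' x ⊆ y →
    ∃ x', Config A x' ∧ x ⊆ x' ∧ f '' x' = y

def ConflictFree (A : ES E) : Prop := ∀ X : Set E, X.Finite → X ∈ A.Con

def IsMinimal (A : ES E) (e : E) : Prop := ∀ e', A.le e' e → e' = e

/-- Event structures with polarities; `true` is Player/positive, `false` is Opponent/negative. -/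
structure ESP (E : Type u) extends ES E where
  pol : E → Bool

def ESP.dual (A : ESP E) : ESP E := { toES := A.toES, pol := fun e => !A.pol e }

def IsESPMap (A : ESP E) (B : ESP F) (f : E → F) : Prop :=
  IsMap A.toES B.toES f ∧ ∀ e, B.pol (f e) = A.pol e

def NegativeESP (A : ESP E) : Prop := ∀ e, IsMinimal A.toES e → A.pol e = false

/-- Single-threaded event structures. -/
def SingleThreaded (A : ES E) : Prop :=
  (∀ e, ∃! m, A.le m e ∧ IsMinimal A m) ∧
  (∀ x e₁ e₂, Cov A x e₁ → Cov A x e₂ → ¬ Config A (insert e₁ (insert e₂ x)) →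
    ∃ m, A.le m e₁ ∧ A.le m e₂)

/- ## Relations as bijections between configurations -/

abbrev Rel2 (E : Type u) := Set (E × E)

def rdom (θ : Rel2 E) : Set E := Prod.fst '' θ
def rran (θ : Rel2 E) : Set E := Prod.snd '' θ
def relBij (θ : Rel2 E) : Prop := ∀ p ∈ θ, ∀ q ∈ θ, (p.1 = q.1 ↔ p.2 = q.2)
def relId (x : Set E) : Rel2 E := (fun e => (e, e)) '' x
def relInv (θ : Rel2 E) : Rel2 E := Prod.swap '' θ
def relComp (θ θ' : Rel2 E) : Rel2 E := {p | ∃ b, (p.1, b) ∈ θ ∧ (b, p.2) ∈ θ'}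
def relRestrict (θ : Rel2 E) (x : Set E) : Rel2 E := {p ∈ θ | p.1 ∈ x}
def relMap (f : E → F) (θ : Rel2 E) : Rel2 F := (Prod.map f f) '' θ

/-- Isomorphism families (without the polarity requirement). -/
def IsIsoFamily (A : ES E) (S : Set (Rel2 E)) : Prop :=
  (∀ θ ∈ S, relBij θ ∧ Config A (rdom θ) ∧ Config A (rran θ)) ∧
  (∀ x, Config A x → relId x ∈ S) ∧
  (∀ θ ∈ S, relInv θ ∈ S) ∧
  (∀ θ ∈ S, ∀ θ' ∈ S, rran θ = rdom θ' → relComp θ θ' ∈ S) ∧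
  (∀ θ ∈ S, ∀ x, Config A x → x ⊆ rdom θ → relRestrict θ x ∈ S) ∧
  (∀ θ ∈ S, ∀ x', Config A x' → rdom θ ⊆ x' → ∃ θ' ∈ S, θ ⊆ θ' ∧ rdom θ' = x')

/-- The members of the family are polarity-preserving. -/
def PolPres (A : ESP E) (S : Set (Rel2 E)) : Prop :=
  ∀ θ ∈ S, ∀ p ∈ θ, A.pol p.1 = A.pol p.2

def FamPres (SA : Set (Rel2 E)) (SB : Set (Rel2 F)) (f : E → F) : Prop :=
  ∀ θ ∈ SA, relMap f θ ∈ SB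

/-- `f ∼ g` : the two maps are symmetric. -/
def SymMaps (A : ES E) (SB : Set (Rel2 F)) (f g : E → F) : Prop :=
  ∀ x, Config A x → {p : F × F | ∃ a ∈ x, p = (f a, g a)} ∈ SB

/-- `θ ⊆⁺ θ'`. -/
def PosRelExt (A : ESP E) (θ θ' : Rel2 E) : Prop :=
  θ ⊆ θ' ∧ ∀ p ∈ θ', p ∉ θ → A.pol p.1 = true ∧ A.pol p.2 = true

/-- `θ ⊆⁻ θ'`. -/
def NegRelExt (A : ESP E) (θ θ' : Rel2 E) : Prop :=
  θ ⊆ θ' ∧ ∀ p ∈ θ', p ∉ θ → A.pol p.1 = false ∧ A.pol p.2 = false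

/-- `x ⊆⁺ x'` for configurations. -/
def PosSetExt (A : ESP E) (x x' : Set E) : Prop :=
  x ⊆ x' ∧ ∀ e ∈ x', e ∉ x → A.pol e = true

def Courteous (S : ESP E) (A : ESP F) (σ : E → F) : Prop :=
  ∀ s₁ s₂, Imm S.toES s₁ s₂ → (S.pol s₁ = true ∨ S.pol s₂ = false) →
    Imm A.toES (σ s₁) (σ s₂)

def Receptive (S : ESP E) (A : ESP F) (σ : E → F) : Prop :=
  ∀ x a, Config S.toES x → Cov A.toES (σ '' x) a → A.pol a = false →
    ∃! s, Cov S.toES x s ∧ σ s = a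

def StrongReceptive (S : ESP E) (SS : Set (Rel2 E)) (A : ESP F) (SA : Set (Rel2 F))
    (σ : E → F) : Prop :=
  ∀ θ ∈ SS, ∀ a₁ a₂ : F, A.pol a₁ = false → A.pol a₂ = false →
    (a₁, a₂) ∉ relMap σ θ → insert (a₁, a₂) (relMap σ θ) ∈ SA →
    ∃! st : E × E, insert st θ ∈ SS ∧ σ st.1 = a₁ ∧ σ st.2 = a₂

/-- Thin: two positive compatible extensions of a member of the family are compatible. -/
def ThinFam (A : ESP E) (S : Set (Rel2 E)) : Prop :=
  ∀ θ ∈ S, ∀ θ₁ ∈ S, ∀ θ₂ ∈ S, PosRelExt A θ θ₁ → PosRelExt A θ θ₂ →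
    Config A.toES (rdom θ₁ ∪ rdom θ₂) → θ₁ ∪ θ₂ ∈ S

/-- Race-preserving essp (family-level). -/
def RacePresFam (A : ESP E) (S : Set (Rel2 E)) : Prop :=
  ∀ θ ∈ S, ∀ θ₁ ∈ S, ∀ θ₂ ∈ S, PosRelExt A θ θ₁ → NegRelExt A θ θ₂ →
    Config A.toES (rdom θ₁ ∪ rdom θ₂) → θ₁ ∪ θ₂ ∈ S

/-- Existence of receptive thin sub-symmetries of `A` and of `A^⊥`. -/
def HasThinReceptiveSubs (A : ESP E) (SA : Set (Rel2 E)) : Prop :=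
  (∃ Sp ⊆ SA, IsIsoFamily A.toES Sp ∧
    (∀ θ ∈ Sp, ∀ θ' ∈ SA, NegRelExt A θ θ' → θ' ∈ Sp) ∧ ThinFam A Sp) ∧
  (∃ Sm ⊆ SA, IsIsoFamily A.toES Sm ∧
    (∀ θ ∈ Sm, ∀ θ' ∈ SA, NegRelExt A.dual θ θ' → θ' ∈ Sm) ∧ ThinFam A.dual Sm)

/-- Thin concurrent games (family-level presentation). -/
def IsTCG (A : ESP E) (SA : Set (Rel2 E)) : Prop :=
  IsIsoFamily A.toES SA ∧ PolPres A SA ∧ RacePresFam A SA ∧ HasThinReceptiveSubs A SA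

/-- ∼-strategies. -/
def IsSimStrategy (S : ESP E) (SS : Set (Rel2 E)) (A : ESP F) (SA : Set (Rel2 F))
    (σ : E → F) : Prop :=
  IsESPMap S A σ ∧ FamPres SS SA σ ∧ IsIsoFamily S.toES SS ∧ PolPres S SS ∧
  Courteous S A σ ∧ StrongReceptive S SS A SA σ ∧ ThinFam S SS

/-- Weak equivalence of ∼-strategies on a common essp. -/
def WeakEquiv {S T GE : Type u} (PS : ESP S) (SS : Set (Rel2 S)) (PT : ESP T)
    (ST : Set (Rel2 T)) (SG : Set (Rel2 GE)) (σ : S → GE) (τ : T → GE) : Prop :=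
  ∃ f : S → T, ∃ g : T → S,
    IsESPMap PS PT f ∧ FamPres SS ST f ∧ IsESPMap PT PS g ∧ FamPres ST SS g ∧
    SymMaps PT.toES ST (f ∘ g) id ∧ SymMaps PS.toES SS (g ∘ f) id ∧
    SymMaps PS.toES SG (τ ∘ f) σ ∧ SymMaps PT.toES SG (σ ∘ g) τ

/- ## Stable families, primes, products, pullbacks -/

def FamLe (Fam : Set (Set E)) (x : Set E) (e e' : E) : Prop :=
  ∀ y ∈ Fam, y ⊆ x → e' ∈ y → e ∈ y

def FamPrime (Fam : Set (Set E)) (x : Set E) (e : E) : Set E :=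
  {e' ∈ x | FamLe Fam x e' e}

def IsPrime (Fam : Set (Set E)) (p : Set E) : Prop :=
  ∃ x ∈ Fam, ∃ e ∈ x, p = FamPrime Fam x e

/-- `e` is the generating (top) event of the prime `p`. -/
def PrRep (Fam : Set (Set E)) (p : Set E) (e : E) : Prop :=
  ∃ x ∈ Fam, e ∈ x ∧ p = FamPrime Fam x e

def PrimeLt (p q : Set E) : Prop := p ⊆ q ∧ p ≠ q

/-- Immediate causality in `Pr(Fam)`. -/
def PrImm (Fam : Set (Set E)) (p q : Set E) : Prop :=
  IsPrime Fam p ∧ IsPrime Fam q ∧ PrimeLt p q ∧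
  ∀ r, IsPrime Fam r → PrimeLt p r → PrimeLt r q → False

/-- Configurations of `Pr(Fam)`. -/
def PrConfig (Fam : Set (Set E)) (z : Set (Set E)) : Prop :=
  z.Finite ∧ (∀ p ∈ z, IsPrime Fam p) ∧
  (∀ p ∈ z, ∀ q, IsPrime Fam q → q ⊆ p → q ∈ z) ∧ ⋃₀ z ∈ Fam

/-- The product stable family `C(A) × C(B)`. -/
def ProdFam (A : ES E) (B : ES F) : Set (Set (E × F)) :=
  {x | x.Finite ∧ Config A (Prod.fst '' x) ∧ Config B (Prod.snd '' x) ∧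
    (∀ p ∈ x, ∀ q ∈ x, p.1 = q.1 → p = q) ∧
    (∀ p ∈ x, ∀ q ∈ x, p.2 = q.2 → p = q) ∧
    (∀ p ∈ x, ∀ q ∈ x, p ≠ q → ∃ y ⊆ x,
      Config A (Prod.fst '' y) ∧ Config B (Prod.snd '' y) ∧ (p ∈ y ↔ q ∉ y))}

/-- The stable family `(C(A) × C(B)) ↾ R` defining the pullback `A ⊛ B` of `f` and `g`. -/
def PbFam (A : ES E) (B : ES F) (f : E → G) (g : F → G) : Set (Set (E × F)) :=
  {x | x ∈ ProdFam A B ∧ ∀ p ∈ x, f p.1 = g p.2}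

/- ## Secured bijections -/

def SecStep (A : ES E) (B : ES F) (θ : Set (E × F)) (p q : E × F) : Prop :=
  p ∈ θ ∧ q ∈ θ ∧ (A.le p.1 q.1 ∨ B.le p.2 q.2)

def SecuredBij (A : ES E) (B : ES F) (f : E → G) (g : F → G) (θ : Set (E × F)) : Prop :=
  Config A (Prod.fst '' θ) ∧ Config B (Prod.snd '' θ) ∧
  (∀ p ∈ θ, ∀ q ∈ θ, (p.1 = q.1 ↔ p.2 = q.2)) ∧
  (∀ p ∈ θ, f p.1 = g p.2) ∧
  (∀ p q, Relation.TransGen (SecStep A B θ) p q → Relation.TransGen (SecStep A B θ) q p → p = q)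

/- ## Parallel composition -/

def IsParES (A : ES E) (B : ES F) (P : ES (E ⊕ F)) : Prop :=
  (∀ e e', P.le e e' ↔ Sum.LiftRel A.le B.le e e') ∧
  (∀ X, X ∈ P.Con ↔ X.Finite ∧ (Sum.inl ⁻¹' X) ∈ A.Con ∧ (Sum.inr ⁻¹' X) ∈ B.Con)

def IsParESP (A : ESP E) (B : ESP F) (P : ESP (E ⊕ F)) : Prop :=
  IsParES A.toES B.toES P.toES ∧
  (∀ a, P.pol (Sum.inl a) = A.pol a) ∧ (∀ b, P.pol (Sum.inr b) = B.pol b)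

def parFam (SA : Set (Rel2 E)) (SB : Set (Rel2 F)) : Set (Rel2 (E ⊕ F)) :=
  {θ | ∃ θA ∈ SA, ∃ θB ∈ SB, θ = relMap Sum.inl θA ∪ relMap Sum.inr θB}

/- ## Copycat -/

def ccPol (A : ESP E) (p : Bool × E) : Bool := cond p.1 (A.pol p.2) (!A.pol p.2)

def ccBase (A : ESP E) (p q : Bool × E) : Prop :=
  (p.1 = q.1 ∧ A.le p.2 q.2) ∨ (p.2 = q.2 ∧ p.1 ≠ q.1 ∧ ccPol A q = true)

def ccLe (A : ESP E) : Bool × E → Bool × E → Prop := Relation.ReflTransGen (ccBase A)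

def ccDcl (A : ESP E) (X : Set (Bool × E)) : Set (Bool × E) := {p | ∃ q ∈ X, ccLe A p q}

def IsCopycatOf (A : ESP E) (CA : ESP (Bool × E)) : Prop :=
  (∀ p q, CA.le p q ↔ ccLe A p q) ∧
  (∀ X, X ∈ CA.Con ↔ X.Finite ∧
    {a | (false, a) ∈ ccDcl A X} ∈ A.Con ∧ {a | (true, a) ∈ ccDcl A X} ∈ A.Con) ∧
  (∀ p, CA.pol p = ccPol A p)

def ccMap (f : E → F) : Bool × E → Bool × F := Prod.map id f

def ccToGame : Bool × E → E ⊕ E := fun p => cond p.1 (Sum.inr p.2) (Sum.inl p.2)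

/- ## Symmetry presented as spans -/

def famOf (Et : ES F) (l r : F → E) : Set (Rel2 E) :=
  {θ | ∃ x, Config Et x ∧ θ = {p | ∃ aa ∈ x, p = (l aa, r aa)}}

def IsSymSpanES (A : ES E) (Et : ES F) (l r : F → E) : Prop :=
  OpenMap Et A l ∧ OpenMap Et A r ∧
  (∀ aa aa', l aa = l aa' → r aa = r aa' → aa = aa') ∧
  (∀ x, Config A x → relId x ∈ famOf Et l r) ∧
  (∀ θ ∈ famOf Et l r, relInv θ ∈ famOf Et l r) ∧
  (∀ θ ∈ famOf Et l r, ∀ θ' ∈ famOf Et l r, rran θ = rdom θ' → relComp θ θ' ∈ famOf Et l r)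

def IsSymSpanESP (A : ESP E) (Et : ESP F) (l r : F → E) : Prop :=
  IsSymSpanES A.toES Et.toES l r ∧ IsESPMap Et A l ∧ IsESPMap Et A r

def MapPresRaces (S : ESP E) (A : ESP F) (f : E → F) : Prop :=
  ∀ x e₁ e₂, Cov S.toES x e₁ → Cov S.toES x e₂ →
    S.pol e₁ = false → S.pol e₂ = true →
    ¬ Config S.toES (insert e₁ (insert e₂ x)) →
    ¬ Config A.toES (insert (f e₁) (insert (f e₂) (f '' x)))

def ReflPosCompat (St : ESP F) (S : ES E) (l : F → E) : Prop :=
  ∀ x x₁ x₂, Config St.toES x → Config St.toES x₁ → Config St.toES x₂ →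
    x ⊆ x₁ → x ⊆ x₂ →
    (∀ e ∈ x₁, e ∉ x → St.pol e = true) → (∀ e ∈ x₂, e ∉ x → St.pol e = true) →
    Config S (l '' x₁ ∪ l '' x₂) → Config St.toES (x₁ ∪ x₂)

/- ## Higher symmetry -/

/-- The higher isomorphism family of an essp given by its family `SA`, at the level of
pairs of events: members correspond to commuting squares `φ' ∘ θ = θ' ∘ φ`. -/
def HigherFam (SA : Set (Rel2 E)) : Set (Rel2 (E × E)) :=
  {Φ | ∃ θ ∈ SA, ∃ θ' ∈ SA, ∃ φ ∈ SA, ∃ φ' ∈ SA,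
    rdom φ = rdom θ ∧ rdom φ' = rran θ ∧ rran φ = rdom θ' ∧ rran φ' = rran θ' ∧
    (∀ a b c d, (a, b) ∈ θ → (a, c) ∈ φ → (b, d) ∈ φ' → (c, d) ∈ θ') ∧
    Φ = {P | ∃ a b c d, (a, b) ∈ θ ∧ (a, c) ∈ φ ∧ (b, d) ∈ φ' ∧ P = ((a, b), (c, d))}}

/-- The higher isomorphism family, transported to the events of `Ã = Pr(SA)`,
i.e. primes of the stable family `SA`. -/
def LiftFam (SA : Set (Rel2 E)) : Set (Rel2 {p : Rel2 E // IsPrime SA p}) :=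
  {Θ | ∃ θ ∈ SA, ∃ θ' ∈ SA, ∃ φ ∈ SA, ∃ φ' ∈ SA,
    rdom φ = rdom θ ∧ rdom φ' = rran θ ∧ rran φ = rdom θ' ∧ rran φ' = rran θ' ∧
    (∀ a b c d, (a, b) ∈ θ → (a, c) ∈ φ → (b, d) ∈ φ' → (c, d) ∈ θ') ∧
    Θ = {P | ∃ a b c d, (a, b) ∈ θ ∧ (a, c) ∈ φ ∧ (b, d) ∈ φ' ∧
          P.1.1 = FamPrime SA θ (a, b) ∧ P.2.1 = FamPrime SA θ' (c, d)}}

/- ## Pullbacks as universal properties -/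

def IsPullbackES {A B C P : Type u} (EP : ES P) (EA : ES A) (EB : ES B) (EC : ES C)
    (Pi1 : P → A) (Pi2 : P → B) (f : A → C) (g : B → C) : Prop :=
  IsMap EP EA Pi1 ∧ IsMap EP EB Pi2 ∧ f ∘ Pi1 = g ∘ Pi2 ∧
  ∀ {X : Type u} (EX : ES X) (h₁ : X → A) (h₂ : X → B),
    IsMap EX EA h₁ → IsMap EX EB h₂ → f ∘ h₁ = g ∘ h₂ →
    ∃! h : X → P, IsMap EX EP h ∧ Pi1 ∘ h = h₁ ∧ Pi2 ∘ h = h₂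

def IsPullbackESP {A B C P : Type u} (EP : ESP P) (EA : ESP A) (EB : ESP B) (EC : ESP C)
    (Pi1 : P → A) (Pi2 : P → B) (f : A → C) (g : B → C) : Prop :=
  IsESPMap EP EA Pi1 ∧ IsESPMap EP EB Pi2 ∧ f ∘ Pi1 = g ∘ Pi2 ∧
  ∀ {X : Type u} (EX : ESP X) (h₁ : X → A) (h₂ : X → B),
    IsESPMap EX EA h₁ → IsESPMap EX EB h₂ → f ∘ h₁ = g ∘ h₂ →
    ∃! h : X → P, IsESPMap EX EP h ∧ Pi1 ∘ h = h₁ ∧ Pi2 ∘ h = h₂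

/- ## Composition of strategies -/

def compLeft {S GA GB GC : Type u} (σ : S → GA ⊕ GB) : S ⊕ GC → (GA ⊕ GB) ⊕ GC :=
  Sum.map σ id

def compRight {T GA GB GC : Type u} (τ : T → GB ⊕ GC) : GA ⊕ T → (GA ⊕ GB) ⊕ GC :=
  Sum.elim (fun a => Sum.inl (Sum.inl a))
    (fun t => Sum.elim (fun b => Sum.inl (Sum.inr b)) (fun c => Sum.inr c) (τ t))

def outAC {A B C : Type u} : (A ⊕ B) ⊕ C → Option (A ⊕ C) :=
  Sum.elim (Sum.elim (fun a => some (Sum.inl a)) (fun _ => none)) (fun c => some (Sum.inr c))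

/-- Visible events of the interaction. -/
def VisE {S T GA GB GC : Type u} (σ : S → GA ⊕ GB) (e : (S ⊕ GC) × (GA ⊕ T)) : Prop :=
  (outAC (compLeft σ e.1)).isSome = true

/-- Visible primes of the interaction. -/
def VisP {S T GA GB GC : Type u} (Fam : Set (Set ((S ⊕ GC) × (GA ⊕ T))))
    (σ : S → GA ⊕ GB) (p : Set ((S ⊕ GC) × (GA ⊕ T))) : Prop :=
  ∃ e, PrRep Fam p e ∧ VisE σ e

/-- The underlying relation of a bijection between configurations of `Pr(Fam)`. -/
def relUnder {P : Type u} (Fam : Set (Set P)) (Θ : Rel2 (Set P)) :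
    Rel2 P :=
  {ee | ∃ pq ∈ Θ, PrRep Fam pq.1 ee.1 ∧ PrRep Fam pq.2 ee.2}

/-- The isomorphism family of the pullback `Pr(Fam)` of two ∼-strategies,
characterised via the projections. -/
def PbSymFam {A B : Type u} (Fam : Set (Set (A × B))) (S1 : Set (Rel2 A))
    (S2 : Set (Rel2 B)) : Set (Rel2 (Set (A × B))) :=
  {Θ | relBij Θ ∧ PrConfig Fam (rdom Θ) ∧ PrConfig Fam (rran Θ) ∧
    relMap Prod.fst (relUnder Fam Θ) ∈ S1 ∧ relMap Prod.snd (relUnder Fam Θ) ∈ S2}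

/-- A witness for the concrete composition `τ ⊙ σ` of strategies. -/
structure CompWitness {S T GA GB GC : Type u} (PS : ESP S) (PT : ESP T)
    (PA : ESP GA) (PC : ESP GC) (σ : S → GA ⊕ GB) (τ : T → GB ⊕ GC) where
  L : ES (S ⊕ GC)
  R : ES (GA ⊕ T)
  hL : IsParES PS.toES PC.toES L
  hR : IsParES PA.toES PT.toES R
  Comp : ESP {p : Set ((S ⊕ GC) × (GA ⊕ T)) //
    VisP (PbFam L R (compLeft σ) (compRight τ)) σ p}
  hle : ∀ p q, Comp.le p q ↔ p.1 ⊆ q.1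
  hcon : ∀ X, X ∈ Comp.Con ↔
    X.Finite ∧ ⋃₀ (Subtype.val '' X) ∈ PbFam L R (compLeft σ) (compRight τ)
  co : {p : Set ((S ⊕ GC) × (GA ⊕ T)) //
    VisP (PbFam L R (compLeft σ) (compRight τ)) σ p} → GA ⊕ GC
  hco : ∀ p e, PrRep (PbFam L R (compLeft σ) (compRight τ)) p.1 e →
    outAC (compLeft σ e.1) = some (co p)
  hpol : ∀ p, Comp.pol p = Sum.elim (fun a => !PA.pol a) (fun c => PC.pol c) (co p)

/-- The isomorphism family of the composition: restriction to visible primes of the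
family of the interaction. -/
def cfam {S T GA GB GC : Type u} {PS : ESP S} {PT : ESP T} {PA : ESP GA} {PC : ESP GC}
    {σ : S → GA ⊕ GB} {τ : T → GB ⊕ GC}
    (SS : Set (Rel2 S)) (ST : Set (Rel2 T)) (SA : Set (Rel2 GA)) (SC : Set (Rel2 GC))
    (w : CompWitness PS PT PA PC σ τ) :
    Set (Rel2 {p : Set ((S ⊕ GC) × (GA ⊕ T)) //
      VisP (PbFam w.L w.R (compLeft σ) (compRight τ)) σ p}) :=
  {Θ | ∃ Φ ∈ PbSymFam (PbFam w.L w.R (compLeft σ) (compRight τ))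
      (parFam SS SC) (parFam SA ST),
    relMap Subtype.val Θ =
      {pq ∈ Φ | VisP (PbFam w.L w.R (compLeft σ) (compRight τ)) σ pq.1 ∧
                VisP (PbFam w.L w.R (compLeft σ) (compRight τ)) σ pq.2}}
section Aux12

variable {E' F' : Type u}

lemma mem_rdom' {θ : Rel2 E'} {e : E'} : e ∈ rdom θ ↔ ∃ b, (e, b) ∈ θ := by
  constructor
  · rintro ⟨⟨a, b⟩, hp, rfl⟩; exact ⟨b, hp⟩
  · rintro ⟨b, hb⟩; exact ⟨(e, b), hb, rfl⟩

lemma mem_rran' {θ : Rel2 E'} {e : E'} : e ∈ rran θ ↔ ∃ a, (a, e) ∈ θ := by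
  constructor
  · rintro ⟨⟨a, b⟩, hp, rfl⟩; exact ⟨a, hp⟩
  · rintro ⟨a, ha⟩; exact ⟨(a, e), ha, rfl⟩

lemma rdom_union' (θ θ' : Rel2 E') : rdom (θ ∪ θ') = rdom θ ∪ rdom θ' :=
  Set.image_union _ _ _

lemma rdom_insert' (a b : E') (θ : Rel2 E') :
    rdom (insert (a, b) θ) = insert a (rdom θ) := Set.image_insert_eq

lemma rran_insert' (a b : E') (θ : Rel2 E') :
    rran (insert (a, b) θ) = insert b (rran θ) := Set.image_insert_eq

lemma rdom_mono' {θ θ' : Rel2 E'} (h : θ ⊆ θ') : rdom θ ⊆ rdom θ' :=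
  Set.image_mono  h

lemma mem_relMap' {f : E' → F'} {θ : Rel2 E'} {a b : F'} :
    (a, b) ∈ relMap f θ ↔ ∃ s t, (s, t) ∈ θ ∧ f s = a ∧ f t = b := by
  constructor
  · rintro ⟨⟨s, t⟩, h, heq⟩
    rw [Prod.map_apply] at heq
    exact ⟨s, t, h, congrArg Prod.fst heq, congrArg Prod.snd heq⟩
  · rintro ⟨s, t, h, rfl, rfl⟩; exact ⟨(s, t), h, rfl⟩

lemma relMap_insert' (f : E' → F') (a b : E') (θ : Rel2 E') :
    relMap f (insert (a, b) θ) = insert (f a, f b) (relMap f θ) := by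
  unfold relMap; rw [Set.image_insert_eq, Prod.map_apply]

lemma relMap_union' (f : E' → F') (θ θ' : Rel2 E') :
    relMap f (θ ∪ θ') = relMap f θ ∪ relMap f θ' := Set.image_union _ _ _

lemma mem_relId' {x : Set E'} {a b : E'} : (a, b) ∈ relId x ↔ a ∈ x ∧ b = a := by
  constructor
  · rintro ⟨t, ht, heq⟩
    cases heq
    exact ⟨ht, rfl⟩
  · rintro ⟨ha, rfl⟩; exact ⟨_, ha, rfl⟩

lemma relId_insert' (a : E') (x : Set E') :
    relId (insert a x) = insert (a, a) (relId x) := Set.image_insert_eq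

lemma rdom_relId' (x : Set E') : rdom (relId x) = x := by
  simp [rdom, relId, Set.image_image]

lemma relMap_relId' (f : E' → F') (x : Set E') :
    relMap f (relId x) = relId (f '' x) := by
  unfold relMap relId
  rw [Set.image_image, Set.image_image]
  rfl

lemma rdom_relMap' (f : E' → F') (θ : Rel2 E') :
    rdom (relMap f θ) = f '' rdom θ := by
  simp [rdom, relMap, Set.image_image]

lemma rran_relInv' (θ : Rel2 E') : rran (relInv θ) = rdom θ := by
  simp [rran, relInv, rdom, Set.image_image]

lemma mem_relInv' {θ : Rel2 E'} {a b : E'} : (a, b) ∈ relInv θ ↔ (b, a) ∈ θ := by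
  constructor
  · rintro ⟨⟨c, d⟩, h, heq⟩
    have h1 : d = a := congrArg Prod.fst heq
    have h2 : c = b := congrArg Prod.snd heq
    subst h1; subst h2; exact h
  · intro h; exact ⟨(b, a), h, rfl⟩

lemma mem_relRestrict' {θ : Rel2 E'} {x : Set E'} {p : E' × E'} :
    p ∈ relRestrict θ x ↔ p ∈ θ ∧ p.1 ∈ x := Iff.rfl

lemma rdom_relRestrict' {θ : Rel2 E'} {x : Set E'} (h : x ⊆ rdom θ) :
    rdom (relRestrict θ x) = x := by
  ext a
  constructor
  · rintro ⟨p, ⟨hp, hx⟩, rfl⟩; exact hx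
  · intro ha
    obtain ⟨b, hb⟩ := mem_rdom'.mp (h ha)
    exact ⟨(a, b), ⟨hb, ha⟩, rfl⟩

lemma relRestrict_rdom_self (θ : Rel2 E') : relRestrict θ (rdom θ) = θ := by
  ext p
  exact ⟨fun h => h.1, fun h => ⟨h, ⟨p, h, rfl⟩⟩⟩

lemma exists_max_es (A : ES E') {T : Set E'} (hfin : T.Finite) (hne : T.Nonempty) :
    ∃ e ∈ T, ∀ e' ∈ T, A.le e e' → e' = e := by
  letI : PartialOrder E' :=
    { le := A.le
      le_refl := A.le_refl
      le_trans := fun _ _ _ => A.le_trans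
      le_antisymm := fun _ _ => A.le_antisymm }
  obtain ⟨e, he, hmax⟩ := Set.Finite.exists_maximalFor id T hfin hne
  exact ⟨e, he, fun e' he' hle => (A.le_antisymm hle (hmax he' hle)).symm⟩

end Aux12

/-- the domain of a strong-receptive courteous pre-∼-strategy on a
race-preserving essp is race-preserving. -/
theorem statement12 {SE AE : Type u} (S : ESP SE) (SS : Set (Rel2 SE))
    (A : ESP AE) (SA : Set (Rel2 AE))
    (hSS : IsIsoFamily S.toES SS) (hpS : PolPres S SS)
    (hSA : IsIsoFamily A.toES SA) (hpA : PolPres A SA)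
    (hrace : RacePresFam A SA)
    (σ : SE → AE) (hmap : IsESPMap S A σ) (hfam : FamPres SS SA σ)
    (hc : Courteous S A σ) (hsr : StrongReceptive S SS A SA σ) :
    RacePresFam S SS := by
  obtain ⟨hax1, hax2, hax3, hax4, hax5, hax6⟩ := hSS
  have hbij : ∀ φ ∈ SS, relBij φ := fun φ h => (hax1 φ h).1
  have hdomC : ∀ φ ∈ SS, Config S.toES (rdom φ) := fun φ h => (hax1 φ h).2.1
  have hranC : ∀ φ ∈ SS, Config S.toES (rran φ) := fun φ h => (hax1 φ h).2.2
  obtain ⟨⟨himg, hloc⟩, hpolσ⟩ := hmap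
  -- uniqueness tool derived from strong receptivity
  have key : ∀ θ0 ∈ SS, ∀ p₁ p₂ q₁ q₂ : SE,
      insert (p₁, p₂) θ0 ∈ SS → insert (q₁, q₂) θ0 ∈ SS →
      σ p₁ = σ q₁ → σ p₂ = σ q₂ →
      S.pol p₁ = false → S.pol p₂ = false →
      (σ p₁, σ p₂) ∉ relMap σ θ0 → p₁ = q₁ ∧ p₂ = q₂ := by
    intro θ0 h0 p₁ p₂ q₁ q₂ hp hq h1 h2 hp1 hp2 hnot
    have hsa : insert (σ p₁, σ p₂) (relMap σ θ0) ∈ SA := by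
      have h := hfam _ hp
      rwa [relMap_insert'] at h
    obtain ⟨st, -, huniq⟩ := hsr θ0 h0 (σ p₁) (σ p₂)
      (by rw [hpolσ]; exact hp1) (by rw [hpolσ]; exact hp2) hnot hsa
    have e1 := huniq (p₁, p₂) ⟨hp, rfl, rfl⟩
    have e2 := huniq (q₁, q₂) ⟨hq, h1.symm, h2.symm⟩
    have e3 : (p₁, p₂) = (q₁, q₂) := e1.trans e2.symm
    exact ⟨congrArg Prod.fst e3, congrArg Prod.snd e3⟩
  intro θ hθ θ₁ hθ₁ θ₂ hθ₂ hpos hneg hzconf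
  obtain ⟨hsub01, hposnew⟩ := hpos
  obtain ⟨hsub02, hnegnew⟩ := hneg
  have hsub12 : ∀ ⦃t : SE⦄, t ∈ rdom θ₁ → t ∈ rdom θ₂ → t ∈ rdom θ := by
    intro t h1 h2
    by_contra hn
    obtain ⟨b1, hb1⟩ := mem_rdom'.mp h1
    obtain ⟨b2, hb2⟩ := mem_rdom'.mp h2
    have hne1 : (t, b1) ∉ θ := fun h => hn ⟨(t, b1), h, rfl⟩
    have hne2 : (t, b2) ∉ θ := fun h => hn ⟨(t, b2), h, rfl⟩
    have hT := (hposnew _ hb1 hne1).1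
    have hF := (hnegnew _ hb2 hne2).1
    simp_all
  have hrestr_base : relRestrict θ₂ (rdom θ) = θ := by
    ext ⟨a, b⟩
    constructor
    · rintro ⟨hab, ha⟩
      obtain ⟨b', hb'⟩ := mem_rdom'.mp ha
      have hb2 : (a, b') ∈ θ₂ := hsub02 hb'
      have heq : b = b' := (hbij θ₂ hθ₂ (a, b) hab (a, b') hb2).mp rfl
      rw [heq]; exact hb'
    · intro h
      exact ⟨hsub02 h, ⟨(a, b), h, rfl⟩⟩
  have main : ∀ n : ℕ, ∀ x : Set SE, Config S.toES x → rdom θ ⊆ x → x ⊆ rdom θ₂ →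
      (x \ rdom θ).ncard = n → θ₁ ∪ relRestrict θ₂ x ∈ SS := by
    intro n
    induction n with
    | zero =>
      intro x hx hs1 hs2 hcard
      have hfin : (x \ rdom θ).Finite := (S.toES.con_finite x hx.1).diff
      have hxeq : x = rdom θ :=
        Set.Subset.antisymm (Set.diff_eq_empty.mp ((Set.ncard_eq_zero hfin).mp hcard)) hs1
      rw [hxeq, hrestr_base, Set.union_eq_left.mpr hsub01]
      exact hθ₁
    | succ n ih =>
      intro x hx hs1 hs2 hcard
      have hxfin : x.Finite := S.toES.con_finite x hx.1
      have hfinD : (x \ rdom θ).Finite := hxfin.diff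
      have hne : (x \ rdom θ).Nonempty := by
        rw [Set.nonempty_iff_ne_empty]
        intro h
        rw [h, Set.ncard_empty] at hcard
        exact Nat.succ_ne_zero n hcard.symm
      obtain ⟨e, heD, hmaxe⟩ := exists_max_es S.toES hfinD hne
      have hex : e ∈ x := heD.1
      have heθ : e ∉ rdom θ := heD.2
      set x₀ : Set SE := x \ {e} with hx₀def
      have hx₀sub : x₀ ⊆ x := Set.diff_subset
      have hx₀C : Config S.toES x₀ := by
        refine ⟨S.toES.con_mono hx₀sub hx.1, ?_⟩
        intro s hs s' hle
        have hs'x : s' ∈ x := hx.2 hs.1 hle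
        refine ⟨hs'x, ?_⟩
        intro hmem
        have hse : s' = e := hmem
        subst hse
        by_cases hsθ : s ∈ rdom θ
        · exact heθ ((hdomC θ hθ).2 hsθ hle)
        · exact hs.2 (hmaxe s ⟨hs.1, hsθ⟩ hle)
      have hins : insert e x₀ = x := by
        rw [hx₀def, Set.insert_diff_singleton]
        exact Set.insert_eq_self.mpr hex
      have hsub1₀ : rdom θ ⊆ x₀ := fun t ht =>
        ⟨hs1 ht, fun h => heθ (Set.mem_singleton_iff.mp h ▸ ht)⟩
      have hsub2₀ : x₀ ⊆ rdom θ₂ := hx₀sub.trans hs2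
      have hcard₀ : (x₀ \ rdom θ).ncard = n := by
        have h1 : x₀ \ rdom θ = (x \ rdom θ) \ {e} := by
          rw [hx₀def, Set.diff_diff_comm]
        rw [h1, Set.ncard_diff_singleton_of_mem heD, hcard]
        omega

      have hψ : θ₁ ∪ relRestrict θ₂ x₀ ∈ SS := ih x₀ hx₀C hsub1₀ hsub2₀ hcard₀
      have hcur_mem : relRestrict θ₂ x₀ ∈ SS := hax5 θ₂ hθ₂ x₀ hx₀C hsub2₀
      have hcur'_mem : relRestrict θ₂ x ∈ SS := hax5 θ₂ hθ₂ x hx hs2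
      have hrdomcur : rdom (relRestrict θ₂ x₀) = x₀ := rdom_relRestrict' hsub2₀
      have hrdomψ : rdom (θ₁ ∪ relRestrict θ₂ x₀) = rdom θ₁ ∪ x₀ := by
        rw [rdom_union', hrdomcur]
      have he_notx₀ : e ∉ x₀ := fun h => h.2 rfl
      obtain ⟨e₂, he2⟩ := mem_rdom'.mp (hs2 hex)
      have he2θ : (e, e₂) ∉ θ := fun h => heθ ⟨(e, e₂), h, rfl⟩
      obtain ⟨hpole, hpole₂⟩ := hnegnew _ he2 he2θ
      have he_not1 : e ∉ rdom θ₁ := fun h => heθ (hsub12 h (hs2 hex))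
      have hθsubcur : θ ⊆ relRestrict θ₂ x₀ := fun p hp =>
        ⟨hsub02 hp, hsub1₀ ⟨p, hp, rfl⟩⟩
      have hcur'eq : relRestrict θ₂ x = insert (e, e₂) (relRestrict θ₂ x₀) := by
        ext ⟨a, b⟩
        constructor
        · rintro ⟨hab, ha⟩
          by_cases hae : a = e
          · subst hae
            have hb : b = e₂ := (hbij θ₂ hθ₂ (a, b) hab (a, e₂) he2).mp rfl
            rw [hb]
            exact Set.mem_insert _ _
          · exact Set.mem_insert_of_mem _ ⟨hab, ⟨ha, hae⟩⟩
        · intro h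
          rcases Set.mem_insert_iff.mp h with h | h
          · rw [h]
            exact ⟨he2, hex⟩
          · exact ⟨h.1, hx₀sub h.2⟩
      have he2_notr : e₂ ∉ rran (relRestrict θ₂ x₀) := by
        intro hm
        obtain ⟨t, ht⟩ := mem_rran'.mp hm
        have hte : t = e := (hbij θ₂ hθ₂ (t, e₂) ht.1 (e, e₂) he2).mpr rfl
        exact he_notx₀ (hte ▸ ht.2)
      have hz'C : Config S.toES (rdom θ₁ ∪ x) := by
        constructor
        · exact S.toES.con_mono (Set.union_subset_union_right _ hs2) hzconf.1
        · intro s hs s' hle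
          rcases hs with hs | hs
          · exact Or.inl ((hdomC θ₁ hθ₁).2 hs hle)
          · exact Or.inr (hx.2 hs hle)
      have hσe_not : σ e ∉ σ '' rdom (θ₁ ∪ relRestrict θ₂ x₀) := by
        rintro ⟨t, ht, hte⟩
        have htz : t ∈ rdom θ₁ ∪ rdom θ₂ := by
          rw [hrdomψ] at ht
          rcases ht with h | h
          · exact Or.inl h
          · exact Or.inr (hsub2₀ h)
        have hez : e ∈ rdom θ₁ ∪ rdom θ₂ := Or.inr (hs2 hex)
        have hte2 : t = e := hloc _ hzconf t htz e hez hte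
        subst hte2
        rw [hrdomψ] at ht
        rcases ht with h | h
        · exact he_not1 h
        · exact he_notx₀ h
      have hnotpair : (σ e, σ e₂) ∉ relMap σ (θ₁ ∪ relRestrict θ₂ x₀) := by
        intro hm
        obtain ⟨s, t, hst, hs, ht⟩ := mem_relMap'.mp hm
        exact hσe_not ⟨s, ⟨(s, t), hst, rfl⟩, hs⟩
      have hθsubcur' : θ ⊆ relRestrict θ₂ x := fun p hp =>
        ⟨hsub02 hp, hs1 ⟨p, hp, rfl⟩⟩
      have hposA : PosRelExt A (relMap σ θ) (relMap σ θ₁) := by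
        refine ⟨Set.image_mono  hsub01, ?_⟩
        rintro ⟨a, b⟩ hab hnotin
        obtain ⟨s, t, hst, rfl, rfl⟩ := mem_relMap'.mp hab
        have hnotθ : (s, t) ∉ θ := fun h => hnotin ⟨(s, t), h, rfl⟩
        obtain ⟨h1, h2⟩ := hposnew _ hst hnotθ
        constructor <;> simp [hpolσ, h1, h2]
      have hnegA : NegRelExt A (relMap σ θ) (relMap σ (relRestrict θ₂ x)) := by
        refine ⟨Set.image_mono  hθsubcur', ?_⟩
        rintro ⟨a, b⟩ hab hnotin
        obtain ⟨s, t, hst, rfl, rfl⟩ := mem_relMap'.mp hab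
        have hnotθ : (s, t) ∉ θ := fun h => hnotin ⟨(s, t), h, rfl⟩
        obtain ⟨h1, h2⟩ := hnegnew _ hst.1 hnotθ
        constructor <;> simp [hpolσ, h1, h2]
      have hconfA : Config A.toES
          (rdom (relMap σ θ₁) ∪ rdom (relMap σ (relRestrict θ₂ x))) := by
        rw [rdom_relMap', rdom_relMap', rdom_relRestrict' hs2, ← Set.image_union]
        exact himg _ hz'C
      have hArace := hrace _ (hfam _ hθ) _ (hfam _ hθ₁) _ (hfam _ hcur'_mem)
        hposA hnegA hconfA
      have hinsSA : insert (σ e, σ e₂) (relMap σ (θ₁ ∪ relRestrict θ₂ x₀)) ∈ SA := by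
        have heq : relMap σ θ₁ ∪ relMap σ (relRestrict θ₂ x)
            = insert (σ e, σ e₂) (relMap σ (θ₁ ∪ relRestrict θ₂ x₀)) := by
          rw [hcur'eq, relMap_insert', relMap_union', Set.union_insert]
        rwa [heq] at hArace
      obtain ⟨⟨s₁, s₂⟩, ⟨hins_mem0, hσ10, hσ20⟩, -⟩ :=
        hsr (θ₁ ∪ relRestrict θ₂ x₀) hψ (σ e) (σ e₂)
          (by rw [hpolσ]; exact hpole) (by rw [hpolσ]; exact hpole₂) hnotpair hinsSA
      have hins_mem : insert (s₁, s₂) (θ₁ ∪ relRestrict θ₂ x₀) ∈ SS := hins_mem0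
      have hσ1' : σ s₁ = σ e := hσ10
      have hσ2' : σ s₂ = σ e₂ := hσ20
      have hs₁_not : s₁ ∉ rdom (θ₁ ∪ relRestrict θ₂ x₀) := by
        intro hm
        obtain ⟨t, ht⟩ := mem_rdom'.mp hm
        have hst : s₂ = t := (hbij _ hins_mem (s₁, s₂) (Set.mem_insert _ _) (s₁, t)
          (Set.mem_insert_of_mem _ ht)).mp rfl
        rw [← hst] at ht
        refine hnotpair ⟨(s₁, s₂), ht, ?_⟩
        rw [Prod.map_apply, hσ1', hσ2']
      have hcfg_ins_s₁ : Config S.toES (insert s₁ (rdom (θ₁ ∪ relRestrict θ₂ x₀))) := by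
        have h := hdomC _ hins_mem
        rwa [rdom_insert'] at h
      have hinsx : insert e (rdom (θ₁ ∪ relRestrict θ₂ x₀)) = rdom θ₁ ∪ x := by
        rw [hrdomψ, ← hins, Set.union_insert]
      have hcfg_ins_e : Config S.toES (insert e (rdom (θ₁ ∪ relRestrict θ₂ x₀))) := by
        rw [hinsx]; exact hz'C
      have hkey1 := key (relId (rdom (θ₁ ∪ relRestrict θ₂ x₀))) (hax2 _ (hdomC _ hψ))
        s₁ s₁ e e
        (by rw [← relId_insert']; exact hax2 _ hcfg_ins_s₁)
        (by rw [← relId_insert']; exact hax2 _ hcfg_ins_e)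
        hσ1' hσ1'
        (by rw [← hpolσ s₁, hσ1', hpolσ]; exact hpole)
        (by rw [← hpolσ s₁, hσ1', hpolσ]; exact hpole)
        (by rw [relMap_relId']
            intro hm
            obtain ⟨hm1, -⟩ := mem_relId'.mp hm
            rw [hσ1'] at hm1
            exact hσe_not hm1)
      obtain ⟨hs1e, -⟩ := hkey1
      rw [hs1e] at hins_mem
      have hxsubψ' : x ⊆ rdom (insert (e, s₂) (θ₁ ∪ relRestrict θ₂ x₀)) := by
        rw [rdom_insert', hinsx]
        exact Set.subset_union_right
      have hψ''_mem : relRestrict (insert (e, s₂) (θ₁ ∪ relRestrict θ₂ x₀)) x ∈ SS :=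
        hax5 _ hins_mem x hx hxsubψ'
      have hψ''eq : relRestrict (insert (e, s₂) (θ₁ ∪ relRestrict θ₂ x₀)) x
          = insert (e, s₂) (relRestrict θ₂ x₀) := by
        ext ⟨a, b⟩
        constructor
        · rintro ⟨hab, ha⟩
          rcases Set.mem_insert_iff.mp hab with h | h
          · exact Set.mem_insert_iff.mpr (Or.inl h)
          · rcases h with h | h
            · have h1 : a ∈ rdom θ₁ := ⟨(a, b), h, rfl⟩
              have hae : a ≠ e := fun hc => he_not1 (hc ▸ h1)
              have hax₀ : a ∈ x₀ := ⟨ha, hae⟩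
              have haθ : a ∈ rdom θ := hsub12 h1 (hsub2₀ hax₀)
              obtain ⟨b', hb'⟩ := mem_rdom'.mp haθ
              have hbb : b = b' := (hbij θ₁ hθ₁ (a, b) h (a, b') (hsub01 hb')).mp rfl
              rw [hbb]
              exact Set.mem_insert_of_mem _ (hθsubcur hb')
            · exact Set.mem_insert_of_mem _ h
        · intro h
          rcases Set.mem_insert_iff.mp h with h | h
          · rw [h]
            exact ⟨Set.mem_insert _ _, hex⟩
          · exact ⟨Set.mem_insert_of_mem _ (Or.inr h), hx₀sub h.2⟩
      have hcomp_mem := hax4 _ (hax3 _ hcur'_mem) _ hψ''_mem (by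
        rw [rran_relInv', rdom_relRestrict' hs2, rdom_relRestrict' hxsubψ'])
      have hχeq : relComp (relInv (insert (e, e₂) (relRestrict θ₂ x₀)))
          (insert (e, s₂) (relRestrict θ₂ x₀))
          = insert (e₂, s₂) (relId (rran (relRestrict θ₂ x₀))) := by
        ext ⟨a, b⟩
        constructor
        · rintro ⟨t, hta, htb⟩
          have hta' : (t, a) ∈ insert (e, e₂) (relRestrict θ₂ x₀) := mem_relInv'.mp hta
          rcases Set.mem_insert_iff.mp hta' with h | h
          · have ht : t = e := congrArg Prod.fst h
            have ha : a = e₂ := congrArg Prod.snd h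
            subst ht; subst ha
            rcases Set.mem_insert_iff.mp htb with h2 | h2
            · have hb : b = s₂ := congrArg Prod.snd h2
              rw [hb]
              exact Set.mem_insert _ _
            · exact absurd h2.2 he_notx₀
          · rcases Set.mem_insert_iff.mp htb with h2 | h2
            · have ht : t = e := congrArg Prod.fst h2
              exact absurd (ht ▸ h.2) he_notx₀
            · have hab : a = b := (hbij _ hcur_mem (t, a) h (t, b) h2).mp rfl
              rw [← hab]
              exact Set.mem_insert_of_mem _
                (mem_relId'.mpr ⟨⟨(t, a), h, rfl⟩, rfl⟩)
        · intro h
          rcases Set.mem_insert_iff.mp h with h | h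
          · have ha : a = e₂ := congrArg Prod.fst h
            have hb : b = s₂ := congrArg Prod.snd h
            subst ha; subst hb
            exact ⟨e, mem_relInv'.mpr (Set.mem_insert _ _), Set.mem_insert _ _⟩
          · obtain ⟨ha, hba⟩ := mem_relId'.mp h
            obtain ⟨t, ht⟩ := mem_rran'.mp ha
            subst hba
            exact ⟨t, mem_relInv'.mpr (Set.mem_insert_of_mem _ ht),
              Set.mem_insert_of_mem _ ht⟩
      have hχ_mem : insert (e₂, s₂) (relId (rran (relRestrict θ₂ x₀))) ∈ SS := by
        have h := hcomp_mem
        rw [hψ''eq, hcur'eq, hχeq] at h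
        exact h
      have hrrancur' : rran (relRestrict θ₂ x)
          = insert e₂ (rran (relRestrict θ₂ x₀)) := by
        rw [hcur'eq, rran_insert']
      have hη_mem : insert (e₂, e₂) (relId (rran (relRestrict θ₂ x₀))) ∈ SS := by
        have h := hax2 _ (hranC _ hcur'_mem)
        rwa [hrrancur', relId_insert'] at h
      have hσe₂_not : σ e₂ ∉ σ '' rran (relRestrict θ₂ x₀) := by
        rintro ⟨t, ht, hte⟩
        have htc : t ∈ rran (relRestrict θ₂ x) := by
          rw [hrrancur']; exact Set.mem_insert_of_mem _ ht
        have he₂c : e₂ ∈ rran (relRestrict θ₂ x) := by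
          rw [hrrancur']; exact Set.mem_insert _ _
        have hte2 : t = e₂ := hloc _ (hranC _ hcur'_mem) t htc e₂ he₂c hte
        subst hte2
        exact he2_notr ht
      have hkey2 := key (relId (rran (relRestrict θ₂ x₀))) (hax2 _ (hranC _ hcur_mem))
        e₂ s₂ e₂ e₂ hχ_mem hη_mem rfl hσ2'
        hpole₂
        (by rw [← hpolσ s₂, hσ2', hpolσ]; exact hpole₂)
        (by rw [relMap_relId']
            intro hm
            obtain ⟨hm1, -⟩ := mem_relId'.mp hm
            exact hσe₂_not hm1)
      obtain ⟨-, hs2e⟩ := hkey2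
      rw [hs2e] at hins_mem
      rw [hcur'eq, Set.union_insert]
      exact hins_mem
  have h := main (rdom θ₂ \ rdom θ).ncard (rdom θ₂) (hdomC θ₂ hθ₂)
    (rdom_mono' hsub02) subset_rfl rfl
  rwa [relRestrict_rdom_self] at h
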